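/- Under assumption (F), let α* be an optimal control for x with trajectory y := y_x^{α*}. Then: (i) for almost every t ∈ (0, t_x(α*)) and every nonzero p ∈ D⁺v(y(t)), ẏ(t) = −p/|p|; (ii) for every t ∈ (0, t_x(α*)) and every p ∈ D⁺v(y(t)), |p| = ℓ(y(t)); (iii) for every t ∈ (0, t_x(α*)) the set D⁺v(y(t)) contains at most one element. -/

import Mathlib

/-!
Optimality of `α` gives the dynamic programming identity `v (y s) = ∫ₛᵗ ℓ (y r) dr + v (y t)`
along `y = y_x^α`, so `ψ = v ∘ y` is differentiable on `(0, t_x(α))` with `ψ' = -ℓ ∘ y`.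
Steering in a straight line gives `v z - v w ≤ (ℓ z + ε) |w - z|` near `z`; testing the
superdifferential inequality in the direction `-p` then yields `|p| ≤ ℓ z`. Conversely, comparing
the superdifferential inequality along the 1-Lipschitz curve `y` with `ψ'` from the left gives
`ℓ (y t) ≤ |p|`, and, where `ẏ t = α t` exists, `|p| ≤ ⟪p, -α t⟫`; with `|α t| ≤ 1` this forces
`α t = -p / |p|`. Finally `D⁺v (y t)` is convex and lies in the sphere of radius `ℓ (y t)`, hence
has at most one point.
-/

open MeasureTheory Filter Metric Set Topology
open scoped ENNReal

noncomputable section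

/-- `n`-dimensional Euclidean space. -/
abbrev Euc (n : ℕ) := EuclideanSpace ℝ (Fin n)

variable {n : ℕ}

/-- Trajectory of the control system `ẏ = α`, `y 0 = x`. -/
def traj (x : Euc n) (α : ℝ → Euc n) (t : ℝ) : Euc n :=
  x + ∫ s in Set.Ioc (0 : ℝ) t, α s

/-- An admissible control: measurable with `‖α s‖ ≤ 1` for a.e. `s ≥ 0`. -/
def Admissible (α : ℝ → Euc n) : Prop :=
  Measurable α ∧ ∀ᵐ s ∂(volume : Measure ℝ), 0 ≤ s → ‖α s‖ ≤ 1

/-- Hitting time `t_x(α) = inf {s ≥ 0 : y_x^α(s) ∈ M}` (`∞` if the set is empty). -/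
def hitTime (M : Set (Euc n)) (x : Euc n) (α : ℝ → Euc n) : ℝ≥0∞ :=
  ⨅ (s : ℝ) (_ : 0 ≤ s) (_ : traj x α s ∈ M), ENNReal.ofReal s

/-- Cost `∫₀^{t_x(α)} ℓ(y_x^α(s)) ds` of a control (as an extended real, `ℓ ≥ 0`). -/
def cost (M : Set (Euc n)) (l : Euc n → ℝ) (x : Euc n) (α : ℝ → Euc n) : ℝ≥0∞ :=
  ∫⁻ s in {s : ℝ | 0 < s ∧ ENNReal.ofReal s < hitTime M x α},
    ENNReal.ofReal (l (traj x α s))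

/-- The value function (extended-real valued). -/
def valE (M : Set (Euc n)) (l : Euc n → ℝ) (x : Euc n) : ℝ≥0∞ :=
  ⨅ (α : ℝ → Euc n) (_ : Admissible α), cost M l x α

/-- The value function `v`. -/
def val (M : Set (Euc n)) (l : Euc n → ℝ) (x : Euc n) : ℝ := (valE M l x).toReal

/-- A control is optimal for `x` if it is admissible and attains the infimum. -/
def IsOptimal (M : Set (Euc n)) (l : Euc n → ℝ) (x : Euc n) (α : ℝ → Euc n) : Prop :=
  Admissible α ∧ cost M l x α = valE M l x

/-- The viscosity subdifferential `D⁻v(z)`. -/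
def subDiff (v : Euc n → ℝ) (z : Euc n) : Set (Euc n) :=
  {p | ∀ ε > 0, ∀ᶠ x in 𝓝 z, v z + (inner ℝ p (x - z) : ℝ) - ε * ‖x - z‖ ≤ v x}

/-- The viscosity superdifferential `D⁺v(z)`. -/
def superDiff (v : Euc n → ℝ) (z : Euc n) : Set (Euc n) :=
  {p | ∀ ε > 0, ∀ᶠ x in 𝓝 z, v x ≤ v z + (inner ℝ p (x - z) : ℝ) + ε * ‖x - z‖}

/-- The set of limiting gradients `D*v(z)`. -/
def limGrad (v : Euc n → ℝ) (z : Euc n) : Set (Euc n) :=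
  {p | ∃ u : ℕ → Euc n, (∀ k, DifferentiableAt ℝ v (u k)) ∧
    Tendsto u atTop (𝓝 z) ∧ Tendsto (fun k => gradient v (u k)) atTop (𝓝 p)}

/-- Distance of the trajectory to the target, with the trajectory extended so that it
remains in `M` after the hitting time. -/
def extDist (M : Set (Euc n)) (x : Euc n) (α : ℝ → Euc n) (t : ℝ) : ℝ :=
  if ENNReal.ofReal t < hitTime M x α then Metric.infDist (traj x α t) M else 0

end

lemma le_of_forall_pos_le_add_mul {a b c : ℝ} (h : ∀ ε > 0, a ≤ b + ε * c) : a ≤ b := by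
  have : Tendsto (fun ε => b + ε * c) (𝓝[>] 0) (𝓝 b) := tendsto_nhdsWithin_of_tendsto_nhds <| by
    simpa using ((tendsto_id (x := 𝓝 (0 : ℝ))).mul_const c).const_add b
  exact ge_of_tendsto this (eventually_nhdsWithin_of_forall h)

lemma le_of_hasDerivAt_of_eventually_sub_le {ψ : ℝ → ℝ} {t L c : ℝ}
    (hψ : HasDerivAt ψ (-L) t) (h : ∀ᶠ s in 𝓝[<] t, ψ s - ψ t ≤ (t - s) * c) : L ≤ c := by
  have hslope := (hasDerivAt_iff_tendsto_slope.1 hψ).mono_left (nhdsLT_le_nhdsNE t)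
  have : -c ≤ -L := ge_of_tendsto hslope <| (h.and self_mem_nhdsWithin).mono
    fun s ⟨hs, hst⟩ => by
      rw [slope_def_field, le_div_iff_of_neg (sub_neg.2 hst)]
      linarith
  linarith

lemma Convex.subsingleton_of_subset_sphere {E : Type*} [NormedAddCommGroup E] [NormedSpace ℝ E]
    [StrictConvexSpace ℝ E] {s : Set E} {r : ℝ} (hs : Convex ℝ s) (hsr : s ⊆ sphere 0 r) :
    s.Subsingleton := by
  intro p hp q hq
  have hnorm : ∀ {w}, w ∈ s → ‖w‖ = r := fun hw => mem_sphere_zero_iff_norm.1 (hsr hw)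
  by_contra hne
  have hmid := hnorm (show (1 / 2 : ℝ) • p + (1 / 2 : ℝ) • q ∈ s from
    hs hp hq (by norm_num) (by norm_num) (by norm_num))
  rw [← smul_add] at hmid
  have := (norm_midpoint_lt_iff ((hnorm hp).trans (hnorm hq).symm)).2 hne
  rw [hmid, hnorm hp] at this
  exact this.false

lemma eq_inv_norm_smul_of_norm_le_inner {E : Type*} [NormedAddCommGroup E]
    [InnerProductSpace ℝ E] {p u : E} (hp : p ≠ 0) (hu : ‖u‖ ≤ 1)
    (h : ‖p‖ ≤ inner ℝ p u) : u = ‖p‖⁻¹ • p := by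
  have hp' : 0 < ‖p‖ := norm_pos_iff.2 hp
  have hcs := real_inner_le_norm p u
  have hu1 : ‖u‖ = 1 := le_antisymm hu (le_of_mul_le_mul_left (a := ‖p‖) (by linarith) hp')
  rw [hu1, mul_one] at hcs
  have heq := (inner_eq_norm_mul_iff_real (x := p) (y := u)).1 (by rw [hu1]; linarith)
  rw [hu1, one_smul] at heq
  exact (inv_smul_smul₀ hp'.ne' u).symm.trans (congrArg _ heq.symm)

lemma setLIntegral_Ioc_ofReal {f : ℝ → ℝ} (hf : Continuous f) (hf0 : ∀ s, 0 ≤ f s) (a b : ℝ) :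
    ∫⁻ s in Ioc a b, ENNReal.ofReal (f s) = ENNReal.ofReal (∫ s in Ioc a b, f s) :=
  (ofReal_integral_eq_lintegral_ofReal hf.integrableOn_Ioc (.of_forall hf0)).symm

section Superdifferential

variable {n : ℕ} {v : Euc n → ℝ}

lemma convex_superDiff (z : Euc n) : Convex ℝ (superDiff v z) := by
  intro p hp q hq a b ha hb hab ε hε
  filter_upwards [hp ε hε, hq ε hε] with w hpw hqw
  rw [inner_add_left, real_inner_smul_left, real_inner_smul_left]
  calc v w = a * v w + b * v w := by rw [← add_mul, hab, one_mul]
    _ ≤ a * (v z + inner ℝ p (w - z) + ε * ‖w - z‖)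
        + b * (v z + inner ℝ q (w - z) + ε * ‖w - z‖) := by gcongr
    _ = _ := by linear_combination (v z + ε * ‖w - z‖) * hab

lemma norm_le_of_mem_superDiff {z p : Euc n} {L : ℝ} (hL : 0 ≤ L)
    (hv : ∀ ε > 0, ∀ᶠ w in 𝓝 z, v z - v w ≤ (L + ε) * ‖w - z‖)
    (hp : p ∈ superDiff v z) : ‖p‖ ≤ L := by
  rcases eq_or_ne p 0 with rfl | hp0
  · simpa using hL
  refine le_of_forall_pos_le_add_mul (c := 2) fun ε hε => ?_
  set u := ‖p‖⁻¹ • p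
  have hu : ‖u‖ = 1 := norm_smul_inv_norm hp0
  have hcurve : Tendsto (fun h : ℝ => z - h • u) (𝓝[>] 0) (𝓝 z) :=
    tendsto_nhdsWithin_of_tendsto_nhds <| by
      simpa using ((tendsto_id (x := 𝓝 (0 : ℝ))).smul_const u).const_sub z
  obtain ⟨h, ⟨hvw, hpw⟩, hh⟩ :=
    ((hcurve.eventually ((hv ε hε).and (hp ε hε))).and self_mem_nhdsWithin).exists
  have hdist : ‖z - h • u - z‖ = h := by
    rw [sub_sub_cancel_left, norm_neg, norm_smul, hu, mul_one, Real.norm_of_nonneg hh.le]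
  have hinner : inner ℝ p (z - h • u - z) = -(h * ‖p‖) := by
    rw [sub_sub_cancel_left, inner_neg_right, real_inner_smul_right, real_inner_smul_right,
      real_inner_self_eq_norm_mul_norm]
    field_simp
  rw [hdist] at hvw hpw
  rw [hinner] at hpw
  nlinarith [hh]

lemma eventually_sub_le_of_mem_superDiff {y : ℝ → Euc n} {t δ ε : ℝ} {b p : Euc n}
    (hp : p ∈ superDiff v (y t)) (hy : ContinuousAt y t) (hε : 0 < ε)
    (hb : ∀ᶠ s in 𝓝[<] t, ‖y s - y t - (t - s) • b‖ ≤ δ * (t - s)) :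
    ∀ᶠ s in 𝓝[<] t,
      v (y s) - v (y t) ≤ (t - s) * (inner ℝ p b + δ * ‖p‖ + ε * (‖b‖ + δ)) := by
  filter_upwards [(hy.eventually (hp ε hε)).filter_mono nhdsWithin_le_nhds, hb,
    self_mem_nhdsWithin] with s hvs hbs hst
  have hsplit : y s - y t = (t - s) • b + (y s - y t - (t - s) • b) := by abel
  have hinner : inner ℝ p (y s - y t) ≤ (t - s) * inner ℝ p b + ‖p‖ * (δ * (t - s)) := by
    rw [hsplit, inner_add_right, real_inner_smul_right]
    have := (real_inner_le_norm p _).trans (mul_le_mul_of_nonneg_left hbs (norm_nonneg p))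
    linarith
  have hnorm : ‖y s - y t‖ ≤ (t - s) * ‖b‖ + δ * (t - s) := by
    rw [hsplit]
    refine (norm_add_le _ _).trans ?_
    rw [norm_smul, Real.norm_of_nonneg (sub_nonneg.2 (le_of_lt hst))]
    linarith
  nlinarith [mul_le_mul_of_nonneg_left hnorm hε.le]

lemma le_inner_add_of_mem_superDiff {y : ℝ → Euc n} {t δ L : ℝ} {b p : Euc n}
    (hψ : HasDerivAt (fun s => v (y s)) (-L) t) (hp : p ∈ superDiff v (y t))
    (hy : ContinuousAt y t) (hb : ∀ᶠ s in 𝓝[<] t, ‖y s - y t - (t - s) • b‖ ≤ δ * (t - s)) :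
    L ≤ inner ℝ p b + δ * ‖p‖ :=
  le_of_forall_pos_le_add_mul (c := ‖b‖ + δ) fun _ hε =>
    le_of_hasDerivAt_of_eventually_sub_le hψ (eventually_sub_le_of_mem_superDiff hp hy hε hb)

lemma le_norm_of_mem_superDiff {y : ℝ → Euc n} {t L : ℝ} {p : Euc n} (hy : LipschitzWith 1 y)
    (hψ : HasDerivAt (fun s => v (y s)) (-L) t) (hp : p ∈ superDiff v (y t)) :
    L ≤ ‖p‖ := by
  have hb : ∀ᶠ s in 𝓝[<] t, ‖y s - y t - (t - s) • (0 : Euc n)‖ ≤ 1 * (t - s) :=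
    eventually_nhdsWithin_of_forall fun s hst => by
      have := hy.dist_le_mul s t
      rw [NNReal.coe_one, one_mul, Real.dist_eq, abs_of_neg (sub_neg.2 (mem_Iio.1 hst)), neg_sub,
        dist_eq_norm] at this
      simpa using this
  simpa using le_inner_add_of_mem_superDiff hψ hp hy.continuous.continuousAt hb

lemma eq_neg_inv_norm_smul_of_mem_superDiff {y : ℝ → Euc n} {t : ℝ} {a p : Euc n}
    (hy : HasDerivAt y a t) (ha : ‖a‖ ≤ 1) (hψ : HasDerivAt (fun s => v (y s)) (-‖p‖) t)
    (hp : p ∈ superDiff v (y t)) (hp0 : p ≠ 0) : a = -(‖p‖⁻¹ • p) := by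
  have hb (δ : ℝ) (hδ : 0 < δ) :
      ∀ᶠ s in 𝓝[<] t, ‖y s - y t - (t - s) • -a‖ ≤ δ * (t - s) := by
    filter_upwards [((hasDerivAt_iff_isLittleO.1 hy).def hδ).filter_mono nhdsWithin_le_nhds,
      self_mem_nhdsWithin] with s hs hst
    have hsmul : (t - s) • -a = (s - t) • a := by rw [smul_neg, ← neg_smul, neg_sub]
    have hnorm : ‖s - t‖ = t - s := by
      rw [Real.norm_eq_abs, abs_of_neg (sub_neg.2 (mem_Iio.1 hst)), neg_sub]
    rwa [hsmul, ← hnorm]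
  have key : ‖p‖ ≤ inner ℝ p (-a) := le_of_forall_pos_le_add_mul fun δ hδ =>
    le_inner_add_of_mem_superDiff hψ hp hy.continuousAt (hb δ hδ)
  rw [eq_inv_norm_smul_of_norm_le_inner hp0 (by rwa [norm_neg]) key |>.symm, neg_neg]

end Superdifferential

section Trajectory

variable {n : ℕ} {α β : ℝ → Euc n}

lemma Admissible.const {u : Euc n} (hu : ‖u‖ ≤ 1) : Admissible (fun _ : ℝ => u) :=
  ⟨measurable_const, .of_forall fun _ _ => hu⟩

lemma Admissible.shift (hα : Admissible α) {t : ℝ} (ht : 0 ≤ t) :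
    Admissible (fun s => α (s + t)) := by
  refine ⟨hα.1.comp (measurable_add_const t), ?_⟩
  filter_upwards [(measurePreserving_add_right volume t).quasiMeasurePreserving.ae hα.2]
    with s hs hs0 using hs (by linarith)

-- Admissibility only bounds `α` on `[0, ∞)`; its truncation `(Ici 0).indicator α` is bounded
-- on all of `ℝ`, and the trajectory is an integral of it.
lemma Admissible.norm_indicator_le (hα : Admissible α) :
    ∀ᵐ s ∂(volume : Measure ℝ), ‖(Ici 0).indicator α s‖ ≤ 1 := by
  filter_upwards [hα.2] with s hs
  by_cases h : 0 ≤ s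
  · simpa [h] using hs h
  · simp [h]

lemma Admissible.locallyIntegrable_indicator (hα : Admissible α) :
    LocallyIntegrable ((Ici 0).indicator α) volume :=
  locallyIntegrable_iff.2 fun _ hk => Measure.integrableOn_of_bounded hk.measure_lt_top.ne
    (hα.1.indicator measurableSet_Ici).aestronglyMeasurable
    (ae_restrict_of_ae hα.norm_indicator_le)

lemma Admissible.intervalIntegrable_indicator (hα : Admissible α) (a b : ℝ) :
    IntervalIntegrable ((Ici 0).indicator α) volume a b :=
  intervalIntegrable_iff.2 <| (hα.locallyIntegrable_indicator.integrableOn_isCompact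
    isCompact_uIcc).mono_set uIoc_subset_uIcc

lemma Admissible.integrableOn_Ioc (hα : Admissible α) {a b : ℝ} (ha : 0 ≤ a) :
    IntegrableOn α (Ioc a b) := by
  refine (hα.locallyIntegrable_indicator.integrableOn_isCompact isCompact_Icc).mono_set
    Ioc_subset_Icc_self |>.congr_fun (fun s hs => ?_) measurableSet_Ioc
  simp [ha.trans hs.1.le]

lemma traj_zero (x : Euc n) (α : ℝ → Euc n) : traj x α 0 = x := by
  simp [traj]

lemma traj_eq_intervalIntegral (x : Euc n) (α : ℝ → Euc n) (t : ℝ) :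
    traj x α t = x + ∫ s in (0 : ℝ)..max t 0, (Ici 0).indicator α s := by
  rcases le_or_gt t 0 with h | h
  · simp [traj, max_eq_right h, Ioc_eq_empty_of_le h]
  · rw [max_eq_left h.le, intervalIntegral.integral_of_le h.le, traj]
    congr 1
    exact setIntegral_congr_fun measurableSet_Ioc fun s hs => by simp [hs.1.le]

lemma traj_const (x u : Euc n) {t : ℝ} (ht : 0 ≤ t) : traj x (fun _ => u) t = x + t • u := by
  rw [traj, setIntegral_const, Real.volume_real_Ioc_of_le ht, sub_zero]

lemma Admissible.lipschitzWith_traj (hα : Admissible α) (x : Euc n) :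
    LipschitzWith 1 (traj x α) := by
  set F := fun t : ℝ => x + ∫ s in (0 : ℝ)..t, (Ici 0).indicator α s
  have hF : LipschitzWith 1 F := by
    refine LipschitzWith.of_dist_le_mul fun a b => ?_
    rw [dist_eq_norm, add_sub_add_left_eq_sub, intervalIntegral.integral_interval_sub_left
      (hα.intervalIntegrable_indicator 0 a) (hα.intervalIntegrable_indicator 0 b),
      NNReal.coe_one, one_mul, Real.dist_eq]
    simpa using intervalIntegral.norm_integral_le_of_norm_le_const_ae
      (hα.norm_indicator_le.mono fun s hs _ => hs)
  rw [show traj x α = F ∘ fun t => max t 0 from funext (traj_eq_intervalIntegral x α)]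
  simpa using hF.comp (LipschitzWith.id.max_const 0)

lemma Admissible.continuous_traj (hα : Admissible α) (x : Euc n) : Continuous (traj x α) :=
  (hα.lipschitzWith_traj x).continuous

lemma Admissible.ae_hasDerivAt_traj (hα : Admissible α) (x : Euc n) :
    ∀ᵐ t ∂(volume : Measure ℝ), 0 < t → HasDerivAt (traj x α) (α t) t := by
  filter_upwards [LocallyIntegrable.ae_hasDerivAt_integral hα.locallyIntegrable_indicator]
    with t ht htpos
  have hderiv := (ht 0).const_add x
  rw [indicator_of_mem (mem_Ici.2 htpos.le)] at hderiv
  refine hderiv.congr_of_eventuallyEq ?_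
  filter_upwards [Ioi_mem_nhds htpos] with u hu
  rw [traj_eq_intervalIntegral, max_eq_left (le_of_lt hu)]

end Trajectory

section DynamicProgramming

variable {n : ℕ} {M : Set (Euc n)} {l : Euc n → ℝ} {x : Euc n} {α β : ℝ → Euc n}

noncomputable def concatCtrl (α : ℝ → Euc n) (t : ℝ) (β : ℝ → Euc n) : ℝ → Euc n :=
  fun s => if s ≤ t then α s else β (s - t)

lemma concatCtrl_shift (α : ℝ → Euc n) (t : ℝ) :
    concatCtrl α t (fun s => α (s + t)) = α := by
  funext s
  by_cases h : s ≤ t <;> simp [concatCtrl, h]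

lemma Admissible.concat (hα : Admissible α) (hβ : Admissible β) (t : ℝ) :
    Admissible (concatCtrl α t β) := by
  refine ⟨.ite measurableSet_Iic hα.1 (hβ.1.comp (measurable_sub_const t)), ?_⟩
  filter_upwards [hα.2, (measurePreserving_add_right volume (-t)).quasiMeasurePreserving.ae hβ.2]
    with s hαs hβs hs
  by_cases h : s ≤ t
  · simpa [concatCtrl, h] using hαs hs
  · simpa [concatCtrl, h, sub_eq_add_neg] using hβs (by linarith)

lemma traj_concatCtrl_of_le (x : Euc n) {s t : ℝ} (hst : s ≤ t) :
    traj x (concatCtrl α t β) s = traj x α s := by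
  unfold traj
  congr 1
  exact setIntegral_congr_fun measurableSet_Ioc fun r hr => by simp [concatCtrl, hr.2.trans hst]

lemma traj_concatCtrl_of_ge (hα : Admissible α) (hβ : Admissible β) (x : Euc n) {s t : ℝ}
    (ht : 0 ≤ t) (hts : t ≤ s) :
    traj x (concatCtrl α t β) s = traj (traj x α t) β (s - t) := by
  have hγ := hα.concat hβ t
  have hright : ∫ r in Ioc t s, concatCtrl α t β r = ∫ r in Ioc 0 (s - t), β r := by
    calc ∫ r in Ioc t s, concatCtrl α t β r = ∫ r in t..s, β (r - t) := by
          rw [intervalIntegral.integral_of_le hts]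
          exact setIntegral_congr_fun measurableSet_Ioc fun r hr => by
            simp [concatCtrl, not_le.2 hr.1]
      _ = ∫ r in Ioc 0 (s - t), β r := by
          rw [intervalIntegral.integral_comp_sub_right, sub_self,
            intervalIntegral.integral_of_le (sub_nonneg.2 hts)]
  rw [traj, ← Ioc_union_Ioc_eq_Ioc ht hts, setIntegral_union (Ioc_disjoint_Ioc_of_le le_rfl)
    measurableSet_Ioc (hγ.integrableOn_Ioc le_rfl) (hγ.integrableOn_Ioc ht), hright,
    ← traj_concatCtrl_of_le (β := β) x le_rfl, traj, traj, add_assoc]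

lemma hitTime_le_ofReal {s : ℝ} (hs : 0 ≤ s) (h : traj x α s ∈ M) :
    hitTime M x α ≤ ENNReal.ofReal s :=
  iInf₂_le_of_le s hs (iInf_le _ h)

lemma hitTime_concatCtrl (hα : Admissible α) (hβ : Admissible β) {t : ℝ} (ht : 0 ≤ t)
    (hle : ENNReal.ofReal t ≤ hitTime M x α) :
    hitTime M x (concatCtrl α t β) = ENNReal.ofReal t + hitTime M (traj x α t) β := by
  apply le_antisymm
  · simp only [hitTime, ENNReal.add_iInf]
    refine le_iInf fun u => le_iInf₂ fun hu hmem => ?_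
    rw [← ENNReal.ofReal_add ht hu]
    refine hitTime_le_ofReal (by positivity) ?_
    rwa [traj_concatCtrl_of_ge hα hβ x ht (le_add_of_nonneg_right hu), add_sub_cancel_left]
  · refine le_iInf fun s => le_iInf₂ fun hs hmem => ?_
    obtain hst | hts := lt_or_ge s t
    · rw [traj_concatCtrl_of_le x hst.le] at hmem
      have := hle.trans (hitTime_le_ofReal hs hmem)
      exact absurd ((ENNReal.ofReal_le_ofReal_iff hs).1 this) (not_le.2 hst)
    · rw [traj_concatCtrl_of_ge hα hβ x ht hts] at hmem
      calc ENNReal.ofReal t + hitTime M (traj x α t) β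
          ≤ ENNReal.ofReal t + ENNReal.ofReal (s - t) :=
            add_le_add_right (hitTime_le_ofReal (sub_nonneg.2 hts) hmem) _
        _ = ENNReal.ofReal s := by
            rw [← ENNReal.ofReal_add ht (sub_nonneg.2 hts), add_sub_cancel]

lemma setLIntegral_costSet_add (g : ℝ → ℝ≥0∞) {t : ℝ} (ht : 0 ≤ t) (τ : ℝ≥0∞) :
    ∫⁻ s in {s : ℝ | 0 < s ∧ ENNReal.ofReal s < ENNReal.ofReal t + τ}, g s
      = (∫⁻ s in Ioc 0 t, g s)
        + ∫⁻ u in {u : ℝ | 0 < u ∧ ENNReal.ofReal u < τ}, g (u + t) := by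
  set S := {u : ℝ | 0 < u ∧ ENNReal.ofReal u < τ}
  have hS : MeasurableSet S :=
    measurableSet_Ioi.inter (ENNReal.measurable_ofReal measurableSet_Iio)
  have hdisj : Disjoint (Ioc 0 t) ((· - t) ⁻¹' S) :=
    disjoint_left.2 fun s hs hs' => by linarith [hs.2, show 0 < s - t from hs'.1]
  -- the two sides differ at most at `s = t`, which matters when `τ = 0`
  have hae : {s : ℝ | 0 < s ∧ ENNReal.ofReal s < ENNReal.ofReal t + τ}
      =ᵐ[volume] (Ioc 0 t ∪ (· - t) ⁻¹' S : Set ℝ) := by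
    refine eventuallyEq_set.2 ?_
    filter_upwards [Measure.ae_ne volume t] with s hst
    simp only [S, mem_union, mem_Ioc, mem_preimage, mem_ofPred_eq, sub_pos]
    rcases hst.lt_or_gt with hst | hts
    · refine ⟨fun h => Or.inl ⟨h.1, hst.le⟩, ?_⟩
      rintro (h | h)
      · exact ⟨h.1, ((ENNReal.ofReal_lt_ofReal_iff (h.1.trans hst)).2 hst).trans_le le_self_add⟩
      · exact absurd h.1 hst.not_gt
    · have key : ENNReal.ofReal s < ENNReal.ofReal t + τ ↔ ENNReal.ofReal (s - t) < τ := by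
        rw [← add_sub_cancel t s, ENNReal.ofReal_add ht (by linarith),
          ENNReal.add_lt_add_iff_left ENNReal.ofReal_ne_top, add_sub_cancel_left]
      rw [key]
      exact ⟨fun h => Or.inr ⟨hts, h.2⟩,
        fun h => ⟨by linarith, h.elim (fun h => absurd h.2 hts.not_ge) And.right⟩⟩
  have hshift : ∫⁻ u in S, g (u + t) = ∫⁻ s in (· - t) ⁻¹' S, g s := by
    have hpre : (· + t) ⁻¹' ((· - t) ⁻¹' S) = S := by ext; simp
    conv_lhs => rw [← hpre]
    exact (measurePreserving_add_right volume t).setLIntegral_comp_preimage_emb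
      (measurableEmbedding_addRight t) g _
  rw [setLIntegral_congr hae, lintegral_union (measurable_sub_const t hS) hdisj, hshift]

lemma cost_concatCtrl (hα : Admissible α) (hβ : Admissible β) {t : ℝ} (ht : 0 ≤ t)
    (hle : ENNReal.ofReal t ≤ hitTime M x α) :
    cost M l x (concatCtrl α t β)
      = (∫⁻ s in Ioc 0 t, ENNReal.ofReal (l (traj x α s))) + cost M l (traj x α t) β := by
  rw [cost, hitTime_concatCtrl hα hβ ht hle, setLIntegral_costSet_add _ ht, cost]
  congr 1
  · exact setLIntegral_congr_fun measurableSet_Ioc fun s hs => by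
      rw [traj_concatCtrl_of_le x hs.2]
  · refine setLIntegral_congr_fun
      (measurableSet_Ioi.inter (ENNReal.measurable_ofReal measurableSet_Iio)) fun u hu => ?_
    rw [traj_concatCtrl_of_ge hα hβ x ht (le_add_of_nonneg_left hu.1.le), add_sub_cancel_right]

lemma valE_le_cost (hα : Admissible α) : valE M l x ≤ cost M l x α :=
  iInf₂_le α hα

lemma valE_le_lintegral_add_valE (hα : Admissible α) {t : ℝ} (ht : 0 ≤ t)
    (hle : ENNReal.ofReal t ≤ hitTime M x α) :
    valE M l x
      ≤ (∫⁻ s in Ioc 0 t, ENNReal.ofReal (l (traj x α s))) + valE M l (traj x α t) := by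
  simp only [valE, ENNReal.add_iInf]
  exact le_iInf₂ fun β hβ =>
    (valE_le_cost (hα.concat hβ t)).trans_eq (cost_concatCtrl hα hβ ht hle)

lemma IsOptimal.valE_eq_lintegral_add (hopt : IsOptimal M l x α) {t : ℝ} (ht : 0 ≤ t)
    (hle : ENNReal.ofReal t ≤ hitTime M x α) :
    valE M l x
      = (∫⁻ s in Ioc 0 t, ENNReal.ofReal (l (traj x α s))) + valE M l (traj x α t) := by
  refine (valE_le_lintegral_add_valE hopt.1 ht hle).antisymm ?_
  calc _ ≤ (∫⁻ s in Ioc 0 t, ENNReal.ofReal (l (traj x α s)))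
        + cost M l (traj x α t) (fun s => α (s + t)) := by
          gcongr
          exact valE_le_cost (hopt.1.shift ht)
    _ = cost M l x α := by
        rw [← cost_concatCtrl hopt.1 (hopt.1.shift ht) ht hle, concatCtrl_shift]
    _ = valE M l x := hopt.2

lemma IsOptimal.valE_traj_eq_lintegral_add (hlc : Continuous l) (hl0 : ∀ z, 0 ≤ l z)
    (hopt : IsOptimal M l x α) {s t : ℝ} (hs : 0 ≤ s) (hst : s ≤ t)
    (hle : ENNReal.ofReal t ≤ hitTime M x α) :
    valE M l (traj x α s)
      = (∫⁻ r in Ioc s t, ENNReal.ofReal (l (traj x α r))) + valE M l (traj x α t) := by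
  have h := (hopt.valE_eq_lintegral_add hs ((ENNReal.ofReal_le_ofReal hst).trans hle)).symm.trans
    (hopt.valE_eq_lintegral_add (hs.trans hst) hle)
  rw [← Ioc_union_Ioc_eq_Ioc hs hst, lintegral_union measurableSet_Ioc
    (Ioc_disjoint_Ioc_of_le le_rfl), add_assoc] at h
  refine (ENNReal.add_right_inj ?_).1 h
  rw [setLIntegral_Ioc_ofReal (f := fun r => l (traj x α r)) (hlc.comp (hopt.1.continuous_traj x))
    fun _ => hl0 _]
  exact ENNReal.ofReal_ne_top

end DynamicProgramming

section ValueFunction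

variable {n : ℕ} {M : Set (Euc n)} {l : Euc n → ℝ}

lemma valE_eq_zero_of_mem {m : Euc n} (hm : m ∈ M) : valE M l m = 0 := by
  refine le_antisymm ((valE_le_cost (Admissible.const (u := 0) (by simp))).trans_eq ?_) bot_le
  have h0 : hitTime M m (fun _ => 0) = 0 :=
    nonpos_iff_eq_zero.1 <| by simpa using hitTime_le_ofReal le_rfl ((traj_zero m _).symm ▸ hm)
  simp [cost, h0]

-- Steer from `z` towards `w` at unit speed; if `M` is hit on the way, the cost is even smaller.
lemma valE_le_ofReal_add_valE {K : ℝ} {z w : Euc n} (hK : ∀ y ∈ segment ℝ z w, l y ≤ K) :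
    valE M l z ≤ ENNReal.ofReal (K * ‖w - z‖) + valE M l w := by
  set h := ‖w - z‖
  set u := h⁻¹ • (w - z)
  have hu : ‖u‖ ≤ 1 := mem_closedBall_zero_iff.1 (inv_norm_smul_mem_unitClosedBall _)
  have hseg : ∀ s ∈ Ioc 0 h, traj z (fun _ => u) s ∈ segment ℝ z w := fun s hs => by
    rw [segment_eq_image', traj_const z u hs.1.le, smul_smul]
    exact ⟨s * h⁻¹, ⟨mul_nonneg hs.1.le (inv_nonneg.2 (norm_nonneg _)), by
      rw [← div_eq_mul_inv]; exact div_le_one_of_le₀ hs.2 (norm_nonneg _)⟩, rfl⟩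
  have hend : traj z (fun _ => u) h = w := by
    rcases eq_or_ne w z with rfl | hwz
    · simp [h, traj_zero]
    · rw [traj_const z u (norm_nonneg _),
        smul_inv_smul₀ (norm_ne_zero_iff.2 (sub_ne_zero.2 hwz)), add_sub_cancel]
  have hc : ∫⁻ s in Ioc 0 h, ENNReal.ofReal (l (traj z (fun _ => u) s))
      ≤ ENNReal.ofReal (K * h) :=
    calc _ ≤ ∫⁻ _ in Ioc 0 h, ENNReal.ofReal K :=
          setLIntegral_mono measurable_const fun s hs =>
            ENNReal.ofReal_le_ofReal (hK _ (hseg s hs))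
      _ = ENNReal.ofReal (K * h) := by
          rw [setLIntegral_const, Real.volume_Ioc, sub_zero, ENNReal.ofReal_mul' (norm_nonneg _)]
  rcases le_or_gt (ENNReal.ofReal h) (hitTime M z fun _ => u) with hhit | hhit
  · calc valE M l z ≤ _ := valE_le_lintegral_add_valE (Admissible.const hu) (norm_nonneg _) hhit
      _ ≤ _ := by rw [hend]; gcongr
  · calc valE M l z ≤ cost M l z (fun _ => u) := valE_le_cost (Admissible.const hu)
      _ ≤ ∫⁻ s in Ioc 0 h, ENNReal.ofReal (l (traj z (fun _ => u) s)) :=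
          lintegral_mono_set fun s hs =>
            ⟨hs.1, ((ENNReal.ofReal_lt_ofReal_iff_of_nonneg hs.1.le).1 (hs.2.trans hhit)).le⟩
      _ ≤ _ := hc.trans le_self_add

lemma valE_lt_top (hMne : M.Nonempty) (hlc : Continuous l) (z : Euc n) : valE M l z < ⊤ := by
  obtain ⟨m, hm⟩ := hMne
  have hcpt : IsCompact (segment ℝ z m) := by
    rw [segment_eq_image']
    exact isCompact_Icc.image (by fun_prop)
  obtain ⟨K, hK⟩ := hcpt.bddAbove_image hlc.continuousOn
  calc valE M l z ≤ ENNReal.ofReal (K * ‖m - z‖) + valE M l m :=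
        valE_le_ofReal_add_valE fun y hy => hK (mem_image_of_mem l hy)
    _ < ⊤ := by simp [valE_eq_zero_of_mem hm]

lemma eventually_val_sub_val_le (hMne : M.Nonempty) (hlc : Continuous l) (hl0 : ∀ z, 0 ≤ l z)
    (z : Euc n) {ε : ℝ} (hε : 0 < ε) :
    ∀ᶠ w in 𝓝 z, val M l z - val M l w ≤ (l z + ε) * ‖w - z‖ := by
  obtain ⟨r, hr, hball⟩ := Metric.eventually_nhds_iff_ball.1
    (hlc.continuousAt.eventually (gt_mem_nhds (lt_add_of_pos_right (l z) hε)))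
  filter_upwards [ball_mem_nhds z hr] with w hw
  have h := valE_le_ofReal_add_valE (M := M) fun y hy =>
    (hball y ((convex_ball z r).segment_subset (mem_ball_self hr) hw hy)).le
  have hwtop := (valE_lt_top hMne hlc w).ne
  have := ENNReal.toReal_mono (by simpa using hwtop) h
  rw [ENNReal.toReal_add ENNReal.ofReal_ne_top hwtop,
    ENNReal.toReal_ofReal (by have := hl0 z; positivity)] at this
  rw [val, val]
  linarith

lemma IsOptimal.hasDerivAt_val_traj {x : Euc n} {α : ℝ → Euc n} (hMne : M.Nonempty)
    (hlc : Continuous l) (hl0 : ∀ z, 0 ≤ l z) (hopt : IsOptimal M l x α) {t : ℝ} (ht : 0 < t)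
    (hlt : ENNReal.ofReal t < hitTime M x α) :
    HasDerivAt (fun s => val M l (traj x α s)) (-l (traj x α t)) t := by
  obtain ⟨b, -, htb, hb⟩ := ENNReal.lt_iff_exists_real_btwn.1 hlt
  rw [ENNReal.ofReal_lt_ofReal_iff_of_nonneg ht.le] at htb
  have hcont := hlc.comp (hopt.1.continuous_traj x)
  have hF := (intervalIntegral.integral_hasDerivAt_left (hcont.intervalIntegrable t b)
    (hcont.stronglyMeasurableAtFilter _ _) hcont.continuousAt).add_const (val M l (traj x α b))
  refine hF.congr_of_eventuallyEq ?_
  filter_upwards [Ioo_mem_nhds ht htb] with s hs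
  rw [val, val, hopt.valE_traj_eq_lintegral_add hlc hl0 hs.1.le hs.2.le hb.le,
    setLIntegral_Ioc_ofReal (f := fun r => l (traj x α r)) hcont fun _ => hl0 _,
    ENNReal.toReal_add ENNReal.ofReal_ne_top
    (valE_lt_top hMne hlc _).ne, ENNReal.toReal_ofReal (setIntegral_nonneg measurableSet_Ioc
    fun _ _ => hl0 _), intervalIntegral.integral_of_le hs.2.le]
  rfl

end ValueFunction

theorem stmt13_general {n : ℕ} (M : Set (Euc n)) (l : Euc n → ℝ)
    (hMne : M.Nonempty)
    (hlc : Continuous l)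
    (hlpos : ∀ z ∉ M, 0 < l z) (hlzero : ∀ z ∈ M, l z = 0)
    (x : Euc n) (α : ℝ → Euc n) (hopt : IsOptimal M l x α) :
    (∀ᵐ t ∂(volume : Measure ℝ), 0 < t → ENNReal.ofReal t < hitTime M x α →
      ∀ p ∈ superDiff (val M l) (traj x α t), p ≠ 0 → α t = -(‖p‖⁻¹ • p)) ∧
    (∀ t : ℝ, 0 < t → ENNReal.ofReal t < hitTime M x α →
      ∀ p ∈ superDiff (val M l) (traj x α t), ‖p‖ = l (traj x α t)) ∧
    (∀ t : ℝ, 0 < t → ENNReal.ofReal t < hitTime M x α →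
      (superDiff (val M l) (traj x α t)).Subsingleton) := by
  have hl0 (z : Euc n) : 0 ≤ l z := by
    by_cases hz : z ∈ M
    exacts [(hlzero z hz).ge, (hlpos z hz).le]
  have hψ {t : ℝ} (ht : 0 < t) (hlt : ENNReal.ofReal t < hitTime M x α) :=
    hopt.hasDerivAt_val_traj hMne hlc hl0 ht hlt
  have hnorm : ∀ t : ℝ, 0 < t → ENNReal.ofReal t < hitTime M x α →
      ∀ p ∈ superDiff (val M l) (traj x α t), ‖p‖ = l (traj x α t) := fun t ht hlt p hp =>
    le_antisymm
      (norm_le_of_mem_superDiff (hl0 _) (fun _ => eventually_val_sub_val_le hMne hlc hl0 _) hp)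
      (le_norm_of_mem_superDiff (hopt.1.lipschitzWith_traj x) (hψ ht hlt) hp)
  refine ⟨?_, hnorm, fun t ht hlt => (convex_superDiff _).subsingleton_of_subset_sphere
    fun p hp => mem_sphere_zero_iff_norm.2 (hnorm t ht hlt p hp)⟩
  filter_upwards [hopt.1.ae_hasDerivAt_traj x, hopt.1.2] with t hy ha ht hlt p hp hp0
  refine eq_neg_inv_norm_smul_of_mem_superDiff (hy ht) (ha ht.le) ?_ hp hp0
  rw [hnorm t ht hlt p hp]
  exact hψ ht hlt

/-- under assumption (F), along an optimal trajectory: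
(i) a.e. on `(0,t_x(α))`, `ẏ(t) (= α(t)) = -p/|p|` for every nonzero `p ∈ D⁺v(y(t))`;
(ii) `|p| = ℓ(y(t))` for every `p ∈ D⁺v(y(t))` and `t ∈ (0,t_x(α))`;
(iii) `D⁺v(y(t))` has at most one element for every `t ∈ (0,t_x(α))`. -/
theorem stmt13 {n : ℕ} (M : Set (Euc n)) (l : Euc n → ℝ)
    (hMne : M.Nonempty) (hMcl : IsClosed M)
    (hlc : Continuous l) (hlbd : BddAbove (Set.range l))
    (hlpos : ∀ z ∉ M, 0 < l z) (hlzero : ∀ z ∈ M, l z = 0)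
    (x : Euc n) (α : ℝ → Euc n) (hopt : IsOptimal M l x α) :
    (∀ᵐ t ∂(volume : Measure ℝ), 0 < t → ENNReal.ofReal t < hitTime M x α →
      ∀ p ∈ superDiff (val M l) (traj x α t), p ≠ 0 → α t = -(‖p‖⁻¹ • p)) ∧
    (∀ t : ℝ, 0 < t → ENNReal.ofReal t < hitTime M x α →
      ∀ p ∈ superDiff (val M l) (traj x α t), ‖p‖ = l (traj x α t)) ∧
    (∀ t : ℝ, 0 < t → ENNReal.ofReal t < hitTime M x α →
      (superDiff (val M l) (traj x α t)).Subsingleton) :=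
  stmt13_general M l hMne hlc hlpos hlzero x α hopt
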